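/- arXiv:2101.03037 — 2 statements merged into one kernel-verified Lean document; each statement's English description precedes it below -/
import Mathlib

section
/- The quantum Wasserstein-1 (EM) norm of any traceless Hermitian operator X on n qubits whose partial trace over the first qubit vanishes equals half its trace norm: if Tr₁ X = 0 then ‖X‖_{EM} = ‖X‖₁ / 2. -/
open scoped BigOperators ComplexOrder

/-- Matrices acting on `n` qubits. -/
abbrev QMat (n : ℕ) := Matrix (Fin n → Fin 2) (Fin n → Fin 2) ℂ

/-- The trace norm (sum of the absolute values of the eigenvalues) of a Hermitian matrix. -/
noncomputable def traceNorm {n : ℕ} (X : QMat n) : ℝ :=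
  if h : X.IsHermitian then ∑ i, |h.eigenvalues i| else 0

/-- The partial trace of `X` over qubit `i` vanishes. -/
def ptraceZero {n : ℕ} (i : Fin n) (X : QMat n) : Prop :=
  ∀ a b : Fin n → Fin 2,
    ∑ v : Fin 2, X (Function.update a i v) (Function.update b i v) = 0

/-- The quantum Wasserstein-1 (earth mover's) norm, primal formulation:
`‖X‖_EM = (1/2) min { Σᵢ ‖Xᵢ‖₁ : Xᵢ Hermitian, Trᵢ Xᵢ = 0, Σᵢ Xᵢ = X }`. -/
noncomputable def emNorm {n : ℕ} (X : QMat n) : ℝ :=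
  (1 / 2) * sInf { r | ∃ Xs : Fin n → QMat n,
    (∀ i, (Xs i).IsHermitian) ∧ (∀ i, ptraceZero i (Xs i)) ∧
    (∑ i, Xs i) = X ∧ r = ∑ i, traceNorm (Xs i) }

/-- The quantum Wasserstein-1 (earth mover's) distance. -/
noncomputable def emDist {n : ℕ} (ρ σ : QMat n) : ℝ := emNorm (ρ - σ)

/-- A density matrix: positive semidefinite with unit trace. -/
def IsState {n : ℕ} (ρ : QMat n) : Prop := ρ.PosSemidef ∧ ρ.trace = 1

/-!
Putting all of `X` on a qubit whose partial trace vanishes is an admissible decomposition, so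
`‖X‖_EM ≤ ‖X‖₁ / 2`. Conversely, every decomposition costs at least `‖X‖₁`, because the trace norm
is subadditive on Hermitian matrices: `‖Y‖₁` is the maximum of `re tr (S Y)` over the contractions
`S = U diag(f) U*` with `U` unitary and `|f| ≤ 1`, attained at the sign of `Y`, and each
`re tr (S ·)` is additive.
-/

open Matrix

namespace Matrix

variable {𝕜 ι : Type*} [RCLike 𝕜] [Fintype ι] [DecidableEq ι]

theorem IsHermitian.trace_mul_eq_sum_eigenvalues {A : Matrix ι ι 𝕜} (hA : A.IsHermitian)
    (B : Matrix ι ι 𝕜) :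
    trace (B * A) = ∑ j, (star (hA.eigenvectorUnitary : Matrix ι ι 𝕜) * B *
      (hA.eigenvectorUnitary : Matrix ι ι 𝕜)) j j * hA.eigenvalues j := by
  set V : Matrix ι ι 𝕜 := ↑hA.eigenvectorUnitary
  have hdiag : star V * A * V = diagonal (RCLike.ofReal ∘ hA.eigenvalues) := by
    simpa [Unitary.conjStarAlgAut_star_apply] using hA.conjStarAlgAut_star_eigenvectorUnitary
  have hVV : V * star V = 1 := Unitary.coe_mul_star_self _
  calc trace (B * A) = trace (V * star V * B * (V * star V * A)) := by simp [hVV]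
    _ = trace (star V * B * V * (star V * A * V)) := by
        simp only [Matrix.mul_assoc]
        rw [trace_mul_comm]
        simp only [Matrix.mul_assoc]
    _ = _ := by simp [hdiag, trace, mul_diagonal]

theorem norm_star_mul_diagonal_mul_apply_self_le {W : Matrix ι ι 𝕜}
    (hW : W ∈ unitaryGroup ι 𝕜) {f : ι → 𝕜} (hf : ∀ k, ‖f k‖ ≤ 1) (j : ι) :
    ‖(star W * diagonal f * W) j j‖ ≤ 1 := by
  have hcol : ∑ k, ‖W k j‖ ^ 2 = 1 := by
    have := congrFun (congrFun (mem_unitaryGroup_iff'.mp hW) j) j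
    simp only [mul_apply, star_apply, one_apply_eq, RCLike.star_def, RCLike.conj_mul] at this
    exact_mod_cast this
  calc ‖(star W * diagonal f * W) j j‖ = ‖∑ k, star (W k j) * f k * W k j‖ := by
        simp [mul_apply, diagonal_apply]
    _ ≤ ∑ k, ‖W k j‖ ^ 2 := by
        refine (norm_sum_le _ _).trans (Finset.sum_le_sum fun k _ => ?_)
        rw [norm_mul, norm_mul, norm_star, sq]
        nlinarith [hf k, norm_nonneg (W k j), mul_self_nonneg ‖W k j‖]
    _ = 1 := hcol

theorem IsHermitian.re_trace_conj_diagonal_mul_le {A : Matrix ι ι 𝕜} (hA : A.IsHermitian)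
    {U : Matrix ι ι 𝕜} (hU : U ∈ unitaryGroup ι 𝕜) {f : ι → 𝕜} (hf : ∀ k, ‖f k‖ ≤ 1) :
    RCLike.re (trace (U * diagonal f * star U * A)) ≤ ∑ j, |hA.eigenvalues j| := by
  set V : Matrix ι ι 𝕜 := ↑hA.eigenvectorUnitary
  have hW : star U * V ∈ unitaryGroup ι 𝕜 :=
    Submonoid.mul_mem _ (Unitary.star_mem hU) hA.eigenvectorUnitary.2
  have hconj : star V * (U * diagonal f * star U) * V =
      star (star U * V) * diagonal f * (star U * V) := by
    simp only [star_mul, star_star, Matrix.mul_assoc]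
  rw [hA.trace_mul_eq_sum_eigenvalues, map_sum]
  refine Finset.sum_le_sum fun j _ => ?_
  rw [hconj, RCLike.re_mul_ofReal]
  calc _ ≤ |RCLike.re ((star (star U * V) * diagonal f * (star U * V)) j j)| * |hA.eigenvalues j| :=
        (le_abs_self _).trans (abs_mul _ _).le
    _ ≤ 1 * |hA.eigenvalues j| := by
        gcongr
        exact (RCLike.abs_re_le_norm _).trans (norm_star_mul_diagonal_mul_apply_self_le hW hf j)
    _ = |hA.eigenvalues j| := one_mul _

theorem IsHermitian.exists_re_trace_conj_diagonal_mul_eq {A : Matrix ι ι 𝕜}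
    (hA : A.IsHermitian) :
    ∃ U ∈ unitaryGroup ι 𝕜, ∃ f : ι → 𝕜, (∀ k, ‖f k‖ ≤ 1) ∧
      RCLike.re (trace (U * diagonal f * star U * A)) = ∑ j, |hA.eigenvalues j| := by
  set V : Matrix ι ι 𝕜 := ↑hA.eigenvectorUnitary
  have hVV : star V * V = 1 := Unitary.coe_star_mul_self _
  refine ⟨V, hA.eigenvectorUnitary.2, fun j => if 0 ≤ hA.eigenvalues j then 1 else -1,
    fun k => by dsimp only; split_ifs <;> simp, ?_⟩
  rw [hA.trace_mul_eq_sum_eigenvalues, map_sum]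
  refine Finset.sum_congr rfl fun j _ => ?_
  have hconj : ∀ D : Matrix ι ι 𝕜, star V * (V * D * star V) * V = D := by
    intro D; simp only [← Matrix.mul_assoc, hVV, Matrix.one_mul]; simp [Matrix.mul_assoc, hVV]
  rw [hconj, diagonal_apply_eq]
  split_ifs with h
  · simp [abs_of_nonneg h]
  · simp [abs_of_neg (not_le.mp h)]

end Matrix

theorem traceNorm_of_isHermitian {n : ℕ} {X : QMat n} (hX : X.IsHermitian) :
    traceNorm X = ∑ i, |hX.eigenvalues i| := dif_pos hX

theorem traceNorm_zero {n : ℕ} : traceNorm (0 : QMat n) = 0 := by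
  simp [traceNorm_of_isHermitian isHermitian_zero,
    (isHermitian_zero.eigenvalues_eq_zero_iff).mpr rfl]

theorem traceNorm_sum_le {n : ℕ} {α : Type*} [Fintype α] {Xs : α → QMat n}
    (hXs : ∀ a, (Xs a).IsHermitian) :
    traceNorm (∑ a, Xs a) ≤ ∑ a, traceNorm (Xs a) := by
  have hsum : (∑ a, Xs a).IsHermitian := isSelfAdjoint_sum _ fun a _ => hXs a
  obtain ⟨U, hU, f, hf, heq⟩ := hsum.exists_re_trace_conj_diagonal_mul_eq
  calc traceNorm (∑ a, Xs a) = ∑ a, RCLike.re (trace (U * diagonal f * star U * Xs a)) := by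
        rw [traceNorm_of_isHermitian hsum, ← heq, Finset.mul_sum, trace_sum, map_sum]
    _ ≤ ∑ a, traceNorm (Xs a) := Finset.sum_le_sum fun a _ => by
        rw [traceNorm_of_isHermitian (hXs a)]
        exact (hXs a).re_trace_conj_diagonal_mul_le hU hf

theorem emNorm_eq_of_ptraceZero {n : ℕ} {X : QMat n} (hX : X.IsHermitian) {i : Fin n}
    (hi : ptraceZero i X) : emNorm X = traceNorm X / 2 := by
  have hleast : IsLeast {r | ∃ Xs : Fin n → QMat n,
      (∀ i, (Xs i).IsHermitian) ∧ (∀ i, ptraceZero i (Xs i)) ∧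
      (∑ i, Xs i) = X ∧ r = ∑ i, traceNorm (Xs i)} (traceNorm X) := by
    refine ⟨⟨Pi.single i X, fun j => ?_, fun j => ?_, by simp, ?_⟩, ?_⟩
    · obtain rfl | h := eq_or_ne j i <;> simp [*]
    · obtain rfl | h := eq_or_ne j i
      · simpa using hi
      · simp [h, ptraceZero]
    · rw [Finset.sum_eq_single i (fun j _ hj => by simp [hj, traceNorm_zero]) (by simp)]
      simp
    · rintro r ⟨Xs, hXs, -, rfl, rfl⟩
      exact traceNorm_sum_le hXs
  rw [emNorm, hleast.csInf_eq]
  ring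

theorem emNorm_of_ptraceZero_first_general (n : ℕ) (hn : 0 < n) (X : QMat n)
    (hX : X.IsHermitian) (h1 : ptraceZero ⟨0, hn⟩ X) :
    emNorm X = traceNorm X / 2 :=
  emNorm_eq_of_ptraceZero hX h1

/-- If `X` is a traceless Hermitian operator on `n` qubits whose partial trace over the
first qubit vanishes, then `‖X‖_EM = ‖X‖₁ / 2`. -/
theorem emNorm_of_ptraceZero_first (n : ℕ) (hn : 0 < n) (X : QMat n)
    (hX : X.IsHermitian) (htr : X.trace = 0) (h1 : ptraceZero ⟨0, hn⟩ X) :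
    emNorm X = traceNorm X / 2 :=
  emNorm_of_ptraceZero_first_general n hn X hX h1
end

section
/- Let w* maximize the linear program max Σⱼ c_{P₁…Pₙ} w_{P₁…Pₙ} subject to Σ_{strings with Pᵢ ≠ I} |w| ≤ 1 for each qubit i, and let a = min_i max_{P∈{X,Y,Z}} |c(σ_P on qubit i)|. Then w*_{P₁…Pₙ} = 0 for any Pauli string whose coefficient satisfies |c_{P₁…Pₙ}| < a · |{ i : Pᵢ ≠ I }|. In particular, w* vanishes on all Pauli strings acting nontrivially on more than 2/a qubits. -/
/-!
If `w P ≠ 0`, move the mass `|w P|` from `P` to single-qubit strings `Q i`, one for each qubit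
`i` on which `P` acts, chosen with `|c (Q i)| ≥ a` and signed like `c (Q i)`. On each qubit the
constraint loses `|w P|` through `P` and gains at most `|w P|` through `Q i`, so the new weights
are feasible, while the objective grows by at least `|w P| (a · wt P - |c P|) > 0`.
The second claim follows because `|c P| ≤ 2`: each coefficient is a difference of expectation
values of the Hermitian involution `pauliString P` in two states.
-/

open scoped BigOperators ComplexOrder

/-- The identity and the three Pauli matrices. -/
noncomputable def pauli : Fin 4 → Matrix (Fin 2) (Fin 2) ℂ
  | 0 => 1
  | 1 => !![0, 1; 1, 0]
  | 2 => !![0, -Complex.I; Complex.I, 0]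
  | 3 => !![1, 0; 0, -1]

/-- The Pauli string `σ_{P₁} ⊗ ⋯ ⊗ σ_{Pₙ}`. -/
noncomputable def pauliString {n : ℕ} (P : Fin n → Fin 4) : QMat n :=
  fun a b => ∏ j, pauli (P j) (a j) (b j)

/-- The number of qubits on which the Pauli string `P` acts non-trivially. -/
def pauliWeight {n : ℕ} (P : Fin n → Fin 4) : ℕ :=
  (Finset.univ.filter fun i => P i ≠ 0).card

open Matrix Finset

section PiKron

variable {ι m R : Type*} [Fintype ι] [CommSemiring R]

def piKron (A : ι → Matrix m m R) : Matrix (ι → m) (ι → m) R :=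
  of fun a b => ∏ j, A j (a j) (b j)

lemma piKron_mul [Fintype m] [DecidableEq ι] (A B : ι → Matrix m m R) :
    piKron A * piKron B = piKron fun j => A j * B j := by
  ext a b
  simp only [piKron, mul_apply, of_apply, ← prod_mul_distrib]
  rw [prod_univ_sum, Fintype.piFinset_univ]

lemma piKron_one [DecidableEq m] :
    piKron (fun _ : ι => (1 : Matrix m m R)) = 1 := by
  ext a b
  simp only [piKron, of_apply, one_apply, prod_boole, mem_univ, true_implies, funext_iff]

lemma conjTranspose_piKron [StarRing R] (A : ι → Matrix m m R) :
    (piKron A)ᴴ = piKron fun j => (A j)ᴴ := by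
  ext a b
  simp [piKron, conjTranspose_apply, star_prod]

end PiKron

lemma pauli_isHermitian (p : Fin 4) : (pauli p).IsHermitian := by
  fin_cases p <;>
    · ext i j
      fin_cases i <;> fin_cases j <;> simp [pauli, conjTranspose_apply, one_apply]

lemma pauli_mul_self (p : Fin 4) : pauli p * pauli p = 1 := by
  fin_cases p <;>
    · ext i j
      fin_cases i <;> fin_cases j <;>
        simp [pauli, mul_apply, Fin.sum_univ_two, one_apply]

lemma pauliString_eq_piKron {n : ℕ} (P : Fin n → Fin 4) :
    pauliString P = piKron fun j => pauli (P j) := rfl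

lemma pauliString_isHermitian {n : ℕ} (P : Fin n → Fin 4) : (pauliString P).IsHermitian := by
  simp only [IsHermitian, pauliString_eq_piKron, conjTranspose_piKron, (pauli_isHermitian _).eq]

lemma pauliString_mul_self {n : ℕ} (P : Fin n → Fin 4) : pauliString P * pauliString P = 1 := by
  simp only [pauliString_eq_piKron, piKron_mul, pauli_mul_self, piKron_one]

namespace Matrix.PosSemidef

variable {m : Type*} [Fintype m] {τ : Matrix m m ℂ}

lemma trace_mul_conjTranspose_mul_self_nonneg (hτ : τ.PosSemidef) (B : Matrix m m ℂ) :
    0 ≤ (τ * (Bᴴ * B)).trace := by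
  rw [← Matrix.mul_assoc, trace_mul_cycle]
  exact (hτ.mul_mul_conjTranspose_same B).trace_nonneg

variable [DecidableEq m] {M : Matrix m m ℂ}

lemma neg_one_le_re_trace_mul (hτ : τ.PosSemidef) (hτ1 : τ.trace = 1) (hM : M.IsHermitian)
    (hM2 : M * M = 1) : -1 ≤ (τ * M).trace.re := by
  have hsq : (1 + M)ᴴ * (1 + M) = (1 + M) + (1 + M) := by
    rw [conjTranspose_add, conjTranspose_one, hM.eq, add_mul, one_mul, mul_add, mul_one, hM2]
    abel
  have := (Complex.le_def.mp (hτ.trace_mul_conjTranspose_mul_self_nonneg (1 + M))).1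
  rw [hsq, Matrix.mul_add, trace_add, Matrix.mul_add, trace_add, Matrix.mul_one, hτ1] at this
  simp only [Complex.zero_re, Complex.add_re, Complex.one_re] at this
  linarith

lemma abs_re_trace_mul_le_one (hτ : τ.PosSemidef) (hτ1 : τ.trace = 1) (hM : M.IsHermitian)
    (hM2 : M * M = 1) : |(τ * M).trace.re| ≤ 1 := by
  have hneg := hτ.neg_one_le_re_trace_mul hτ1 hM.neg (by rw [neg_mul_neg, hM2])
  rw [Matrix.mul_neg, trace_neg, Complex.neg_re] at hneg
  exact abs_le.mpr ⟨hτ.neg_one_le_re_trace_mul hτ1 hM hM2, by linarith⟩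

end Matrix.PosSemidef

lemma abs_re_trace_sub_mul_pauliString_le_two {n : ℕ} {ρ σ : QMat n} (hρ : IsState ρ)
    (hσ : IsState σ) (P : Fin n → Fin 4) : |((ρ - σ) * pauliString P).trace.re| ≤ 2 := by
  have hP := pauliString_isHermitian P
  have hP2 := pauliString_mul_self P
  rw [Matrix.sub_mul, trace_sub, Complex.sub_re]
  calc _ ≤ |(ρ * pauliString P).trace.re| + |(σ * pauliString P).trace.re| := abs_sub _ _
    _ ≤ 1 + 1 := add_le_add (hρ.1.abs_re_trace_mul_le_one hρ.2 hP hP2)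
        (hσ.1.abs_re_trace_mul_le_one hσ.2 hP hP2)
    _ = 2 := one_add_one_eq_two

section LocalWeights

variable {ι κ : Type*} [Fintype ι] [DecidableEq ι] [Fintype κ] (acts : ι → κ → Prop)
  [∀ R k, Decidable (acts R k)]

def IsFeasibleWeight (w : ι → ℝ) : Prop :=
  ∀ k, ∑ R ∈ univ.filter (acts · k), |w R| ≤ 1

def transferWeight (w : ι → ℝ) (P : ι) (Q : κ → ι) (x : κ → ℝ) : ι → ℝ :=
  w - Pi.single P (w P) + ∑ i ∈ univ.filter (acts P), Pi.single (Q i) (x i)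

variable {acts}

lemma dotProduct_transferWeight (c w : ι → ℝ) (P : ι) (Q : κ → ι) (x : κ → ℝ) :
    c ⬝ᵥ transferWeight acts w P Q x
      = c ⬝ᵥ w - c P * w P + ∑ i ∈ univ.filter (acts P), c (Q i) * x i := by
  simp only [transferWeight, dotProduct_add, dotProduct_sub, dotProduct_sum, dotProduct_single]

variable [DecidableEq κ]

lemma isFeasibleWeight_transferWeight {w : ι → ℝ} (hw : IsFeasibleWeight acts w) (P : ι)
    {Q : κ → ι} (hQ : ∀ i k, acts (Q i) k → k = i) {x : κ → ℝ} (hx : ∀ i, |x i| ≤ |w P|) :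
    IsFeasibleWeight acts (transferWeight acts w P Q x) := by
  intro k
  set S := univ.filter (acts P)
  set T := univ.filter (acts · k)
  set e : ι → ℝ := Pi.single P (w P)
  have hremove : ∀ R, |w R - e R| = |w R| - |e R| := by
    intro R
    by_cases h : R = P <;> simp [e, h]
  have hadd : ∑ i ∈ S, (if acts (Q i) k then |x i| else 0) ≤ if acts P k then |w P| else 0 := by
    calc _ ≤ ∑ i ∈ S, if k = i then |w P| else 0 := sum_le_sum fun i _ => by
          split_ifs with hact hki
          · exact hx i
          · exact absurd (hQ i k hact) hki
          · positivity
          · rfl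
      _ = if acts P k then |w P| else 0 := by simp [S]
  calc ∑ R ∈ T, |transferWeight acts w P Q x R|
      ≤ ∑ R ∈ T, (|w R| - |e R| + ∑ i ∈ S, |(Pi.single (Q i) (x i) : ι → ℝ) R|) :=
        sum_le_sum fun R _ => by
          simp only [transferWeight, Pi.add_apply, Pi.sub_apply, Finset.sum_apply, ← hremove]
          exact (abs_add_le _ _).trans (by gcongr; exact abs_sum_le_sum_abs _ _)
    _ = ∑ R ∈ T, |w R| - (if acts P k then |w P| else 0)
          + ∑ i ∈ S, (if acts (Q i) k then |x i| else 0) := by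
        rw [sum_add_distrib, sum_sub_distrib, sum_comm]
        simp [T, e, Pi.single_apply, apply_ite, sum_ite_eq']
    _ ≤ ∑ R ∈ T, |w R| := by linarith
    _ ≤ 1 := hw k

theorem eq_zero_of_abs_lt_sum_abs_local {c w : ι → ℝ} (hw : IsFeasibleWeight acts w)
    (hopt : ∀ w', IsFeasibleWeight acts w' → c ⬝ᵥ w' ≤ c ⬝ᵥ w) {P : ι} {Q : κ → ι}
    (hQ : ∀ i k, acts (Q i) k → k = i)
    (hlt : |c P| < ∑ i ∈ univ.filter (acts P), |c (Q i)|) : w P = 0 := by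
  by_contra hP
  set x : κ → ℝ := fun i => |w P| * SignType.sign (c (Q i))
  have hx : ∀ i, |x i| ≤ |w P| := fun i => by
    rw [abs_mul, abs_abs]
    refine mul_le_of_le_one_right (abs_nonneg _) ?_
    rcases SignType.sign (c (Q i)) with _ | _ | _ <;> simp
  have hgain : ∑ i ∈ univ.filter (acts P), c (Q i) * x i
      = |w P| * ∑ i ∈ univ.filter (acts P), |c (Q i)| := by
    simp only [x, mul_sum, mul_left_comm (c _), self_mul_sign]
  have hloss : c P * w P ≤ |w P| * |c P| := by
    rw [mul_comm, ← abs_mul]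
    exact le_abs_self _
  have := hopt _ (isFeasibleWeight_transferWeight hw P hQ hx)
  rw [dotProduct_transferWeight, hgain] at this
  nlinarith [abs_pos.mpr hP]

end LocalWeights

theorem optimal_weights_are_local_general (n : ℕ)
    (ρ σ : QMat n) (hρ : IsState ρ) (hσ : IsState σ)
    (c : (Fin n → Fin 4) → ℝ)
    (hc : ∀ P, c P = (((ρ - σ) * pauliString P).trace).re)
    (w : (Fin n → Fin 4) → ℝ)
    (hfeas : ∀ i : Fin n,
      ∑ P ∈ Finset.univ.filter (fun P : Fin n → Fin 4 => P i ≠ 0), |w P| ≤ 1)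
    (hopt : ∀ w' : (Fin n → Fin 4) → ℝ,
      (∀ i : Fin n,
        ∑ P ∈ Finset.univ.filter (fun P : Fin n → Fin 4 => P i ≠ 0), |w' P| ≤ 1) →
      ∑ P, c P * w' P ≤ ∑ P, c P * w P)
    (a : ℝ)
    (ha : a = ⨅ i : Fin n, ⨆ p : Fin 3,
      |c (fun j => if j = i then p.succ else 0)|)
    (hapos : 0 < a) :
    (∀ P : Fin n → Fin 4, |c P| < a * (pauliWeight P : ℝ) → w P = 0) ∧
    (∀ P : Fin n → Fin 4, (2 : ℝ) / a < (pauliWeight P : ℝ) → w P = 0) := by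
  have hlarge : ∀ i, ∃ p : Fin 3, a ≤ |c (fun j => if j = i then p.succ else 0)| := by
    intro i
    obtain ⟨p, hp⟩ := exists_eq_ciSup_of_finite
      (f := fun p : Fin 3 => |c (fun j => if j = i then p.succ else 0)|)
    exact ⟨p, hp ▸ ha ▸ ciInf_le (Set.finite_range _).bddBelow i⟩
  choose p hp using hlarge
  have hlocal : ∀ P : Fin n → Fin 4, |c P| < a * (pauliWeight P : ℝ) → w P = 0 := by
    intro P hP
    refine eq_zero_of_abs_lt_sum_abs_local (acts := fun (R : Fin n → Fin 4) k => R k ≠ 0)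
      hfeas hopt (Q := fun i j => if j = i then (p i).succ else 0) (fun i k hk => ?_) ?_
    · by_contra h
      simp [h] at hk
    · calc |c P| < a * (pauliWeight P : ℝ) := hP
        _ = ∑ i ∈ univ.filter (P · ≠ 0), a := by simp [pauliWeight, mul_comm]
        _ ≤ _ := sum_le_sum fun i _ => hp i
  refine ⟨hlocal, fun P hP => hlocal P ?_⟩
  calc |c P| ≤ 2 := hc P ▸ abs_re_trace_sub_mul_pauliString_le_two hρ hσ P
    _ < a * pauliWeight P := (div_lt_iff₀' hapos).mp hP

/-- If `w` maximizes the linear program `max Σ_P c_P w_P` subject to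
`Σ_{P : Pᵢ ≠ I} |w_P| ≤ 1` for each qubit `i`, with coefficients
`c_P = Tr[(ρ−σ)σ_{P₁}⊗⋯⊗σ_{Pₙ}]`, and
`a = minᵢ max_{Q ∈ {X,Y,Z}} |c(σ_Q on qubit i)| > 0`, then `w_P = 0` whenever
`|c_P| < a · |{i : Pᵢ ≠ I}|`; in particular `w` vanishes on all Pauli strings
acting non-trivially on more than `2/a` qubits. -/
theorem optimal_weights_are_local (n : ℕ) (hn : 0 < n)
    (ρ σ : QMat n) (hρ : IsState ρ) (hσ : IsState σ)
    (c : (Fin n → Fin 4) → ℝ)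
    (hc : ∀ P, c P = (((ρ - σ) * pauliString P).trace).re)
    (w : (Fin n → Fin 4) → ℝ)
    (hfeas : ∀ i : Fin n,
      ∑ P ∈ Finset.univ.filter (fun P : Fin n → Fin 4 => P i ≠ 0), |w P| ≤ 1)
    (hopt : ∀ w' : (Fin n → Fin 4) → ℝ,
      (∀ i : Fin n,
        ∑ P ∈ Finset.univ.filter (fun P : Fin n → Fin 4 => P i ≠ 0), |w' P| ≤ 1) →
      ∑ P, c P * w' P ≤ ∑ P, c P * w P)
    (a : ℝ)
    (ha : a = ⨅ i : Fin n, ⨆ p : Fin 3,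
      |c (fun j => if j = i then p.succ else 0)|)
    (hapos : 0 < a) :
    (∀ P : Fin n → Fin 4, |c P| < a * (pauliWeight P : ℝ) → w P = 0) ∧
    (∀ P : Fin n → Fin 4, (2 : ℝ) / a < (pauliWeight P : ℝ) → w P = 0) :=
  optimal_weights_are_local_general n ρ σ hρ hσ c hc w hfeas hopt a ha hapos
end
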